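/- Let M be a random n × n Boolean matrix whose rows are independent uniform r-subsets of [n] with r < n^0.01, and let k = n^(1/4). Then with probability 1 − o(1), for all a, b ≤ k with a, b > 2, every a × b submatrix of M contains either a row or a column with at most two 1-entries. -/

import Mathlib

/-- The sample space for a random `n × n` Boolean matrix whose rows are independent
uniformly random `r`-subsets of `[n]`: a choice of an `r`-subset for each row. -/
abbrev Omega (n r : ℕ) := Fin n → {s : Finset (Fin n) // s.card = r}

/-- The Boolean matrix determined by a sample point: `M i j = 1` iff `j` lies in the
`r`-subset chosen for row `i`. -/
def sample {n r : ℕ} (ω : Omega n r) (i j : Fin n) : Bool := decide (j ∈ (ω i).1)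

/-- The probability of an event under the uniform distribution on `Omega n r`. -/
noncomputable def prob (n r : ℕ) (P : Omega n r → Prop) : ℝ :=
  (Nat.card {ω : Omega n r // P ω} : ℝ) / (Fintype.card (Omega n r))

/-- Expectation of a real random variable under the uniform distribution on `Omega n r`. -/
noncomputable def expect (n r : ℕ) (X : Omega n r → ℝ) : ℝ :=
  (∑ ω : Omega n r, X ω) / (Fintype.card (Omega n r))

open Finset

lemma count_superset_le (n r : ℕ) (T : Finset (Fin n)) :
    Nat.card {s : {s : Finset (Fin n) // s.card = r} // T ⊆ s.1} * (n - T.card) ^ T.card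
      ≤ n.choose r * r ^ T.card := by
  classical
  set t := T.card with ht
  have hcard : Nat.card {s : {s : Finset (Fin n) // s.card = r} // T ⊆ s.1}
      = (Finset.univ.filter (fun s : Finset (Fin n) => s.card = r ∧ T ⊆ s)).card := by
    rw [Nat.card_congr (Equiv.subtypeSubtypeEquivSubtypeInter _ _), Nat.card_eq_fintype_card,
      Fintype.card_subtype]
  rw [hcard]
  have hempty : ∀ (h : ¬ (t ≤ r ∧ r ≤ n)),
      (Finset.univ.filter (fun s : Finset (Fin n) => s.card = r ∧ T ⊆ s)) = ∅ := by
    intro h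
    rw [Finset.filter_eq_empty_iff]
    intro s _
    rintro ⟨h1, h2⟩
    apply h
    constructor
    · rw [← h1]; exact Finset.card_le_card h2
    · rw [← h1]; exact le_trans (Finset.card_le_univ s) (by simp)
  by_cases hc : t ≤ r ∧ r ≤ n
  · obtain ⟨htr, hrn⟩ := hc
    have hcnt : (Finset.univ.filter (fun s : Finset (Fin n) => s.card = r ∧ T ⊆ s)).card
        ≤ (n - t).choose (r - t) := by
      have : (Finset.univ.filter (fun s : Finset (Fin n) => s.card = r ∧ T ⊆ s)).card
          ≤ ((Finset.univ \ T).powersetCard (r - t)).card := by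
        apply Finset.card_le_card_of_injOn (fun s => s \ T)
        · intro s hs
          simp only [Finset.coe_filter, Set.mem_setOf_eq, Finset.mem_univ, true_and] at hs
          rw [Finset.mem_coe, Finset.mem_powersetCard]
          exact ⟨Finset.sdiff_subset_sdiff (Finset.subset_univ _) le_rfl,
            by rw [Finset.card_sdiff_of_subset hs.2, hs.1]⟩
        · intro s1 h1 s2 h2 he
          simp only [Finset.coe_filter, Set.mem_setOf_eq, Finset.mem_univ, true_and] at h1 h2
          simp only [] at he
          have e1 : s1 \ T ∪ T = s1 := Finset.sdiff_union_of_subset h1.2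
          have e2 : s2 \ T ∪ T = s2 := Finset.sdiff_union_of_subset h2.2
          rw [← e1, ← e2, he]
      rwa [Finset.card_powersetCard, Finset.card_sdiff_of_subset (Finset.subset_univ _),
        Finset.card_univ, Fintype.card_fin] at this
    have htn : t ≤ n := le_trans htr hrn
    have key : r.choose t * (n - t) ^ t ≤ n.choose t * r ^ t := by
      apply Nat.le_of_mul_le_mul_left _ t.factorial_pos
      calc t.factorial * (r.choose t * (n - t) ^ t)
          = r.descFactorial t * (n - t) ^ t := by
            rw [Nat.descFactorial_eq_factorial_mul_choose]; ring
        _ ≤ r ^ t * (n + 1 - t) ^ t :=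
            Nat.mul_le_mul (Nat.descFactorial_le_pow r t)
              (Nat.pow_le_pow_left (by omega) t)
        _ ≤ r ^ t * n.descFactorial t :=
            Nat.mul_le_mul_left _ (Nat.pow_sub_le_descFactorial n t)
        _ = t.factorial * (n.choose t * r ^ t) := by
            rw [Nat.descFactorial_eq_factorial_mul_choose]; ring
    have hchoosepos : 0 < n.choose t := Nat.choose_pos htn
    apply Nat.le_of_mul_le_mul_left _ hchoosepos
    calc n.choose t * ((Finset.univ.filter
            (fun s : Finset (Fin n) => s.card = r ∧ T ⊆ s)).card * (n - t) ^ t)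
        ≤ n.choose t * ((n - t).choose (r - t) * (n - t) ^ t) :=
          Nat.mul_le_mul_left _ (Nat.mul_le_mul_right _ hcnt)
      _ = (n.choose r * r.choose t) * (n - t) ^ t := by
          rw [Nat.choose_mul htr]; ring
      _ ≤ n.choose r * (n.choose t * r ^ t) := by
          rw [mul_assoc]
          exact Nat.mul_le_mul_left _ key
      _ = n.choose t * (n.choose r * r ^ t) := by ring
  · rw [hempty hc]
    simp

lemma card_omega (n r : ℕ) : Fintype.card (Omega n r) = (n.choose r) ^ n := by
  classical
  rw [Fintype.card_fun, Fintype.card_finset_len, Fintype.card_fin]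

lemma prob_nonneg (n r : ℕ) (P : Omega n r → Prop) : 0 ≤ prob n r P := by
  unfold prob; positivity

lemma prob_le_sum (n r : ℕ) {ι : Type} (s : Finset ι) (P : ι → Omega n r → Prop)
    (Q : Omega n r → Prop) (h : ∀ ω, Q ω → ∃ x ∈ s, P x ω) :
    prob n r Q ≤ ∑ x ∈ s, prob n r (P x) := by
  classical
  unfold prob
  rw [← Finset.sum_div]
  have hden : (0:ℝ) ≤ (Fintype.card (Omega n r) : ℝ)⁻¹ := by positivity
  rw [div_eq_mul_inv, div_eq_mul_inv]
  apply mul_le_mul_of_nonneg_right _ hden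
  have hnat : Nat.card {ω : Omega n r // Q ω} ≤ ∑ x ∈ s, Nat.card {ω : Omega n r // P x ω} := by
    simp only [Nat.card_eq_fintype_card, Fintype.card_subtype]
    calc (Finset.univ.filter Q).card
        ≤ (s.biUnion (fun x => Finset.univ.filter (P x))).card := by
          apply Finset.card_le_card
          intro ω hω
          simp only [Finset.mem_filter, Finset.mem_univ, true_and] at hω
          obtain ⟨x, hx, hPx⟩ := h ω hω
          simp only [Finset.mem_biUnion]
          exact ⟨x, hx, by simp [hPx]⟩
      _ ≤ ∑ x ∈ s, (Finset.univ.filter (P x)).card := Finset.card_biUnion_le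
  exact_mod_cast hnat

lemma prob_pi (n r : ℕ) (g : Fin n → Finset (Fin n)) :
    prob n r (fun ω => ∀ i, g i ⊆ (ω i).1)
      = ∏ i, ((Nat.card {s : {s : Finset (Fin n) // s.card = r} // g i ⊆ s.1} : ℝ)
          / (n.choose r : ℝ)) := by
  classical
  unfold prob
  rw [Nat.card_congr (Equiv.subtypePiEquivPi (p := fun i (s : {s : Finset (Fin n) // s.card = r}) => g i ⊆ s.1)),
    Nat.card_pi, card_omega]
  rw [Finset.prod_div_distrib]
  congr 1
  · push_cast; rfl
  · rw [Finset.prod_const, Finset.card_univ, Fintype.card_fin]; push_cast; ring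

lemma prob_subset_le (n r : ℕ) (hrn : r ≤ n) (K : ℝ) (hK : 0 < (n : ℝ) - K)
    (g : Fin n → Finset (Fin n)) (hg : ∀ i, ((g i).card : ℝ) ≤ K) :
    prob n r (fun ω => ∀ i, g i ⊆ (ω i).1)
      ≤ ((r : ℝ) / ((n : ℝ) - K)) ^ (∑ i, (g i).card) := by
  rw [prob_pi, ← Finset.prod_pow_eq_pow_sum]
  apply Finset.prod_le_prod
  · intro i _; positivity
  · intro i _
    set T := g i
    set t := T.card with htdef
    have htK : (t : ℝ) ≤ K := hg i
    have htn : (t : ℝ) < (n : ℝ) := lt_of_le_of_lt htK (by linarith)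
    have htn' : t ≤ n := by exact_mod_cast htn.le
    have hnt : ((n - t : ℕ) : ℝ) = (n : ℝ) - t := by
      push_cast [Nat.cast_sub htn'] ; ring
    have hntpos : (0:ℝ) < (n:ℝ) - t := by linarith
    have hCpos : (0:ℝ) < (n.choose r : ℝ) := by exact_mod_cast Nat.choose_pos hrn
    have hkey := count_superset_le n r T
    have hkeyR : (Nat.card {s : {s : Finset (Fin n) // s.card = r} // T ⊆ s.1} : ℝ)
        * ((n : ℝ) - t) ^ t ≤ (n.choose r : ℝ) * (r : ℝ) ^ t := by
      rw [← hnt]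
      exact_mod_cast hkey
    have step1 : (Nat.card {s : {s : Finset (Fin n) // s.card = r} // T ⊆ s.1} : ℝ)
        / (n.choose r : ℝ) ≤ ((r : ℝ) / ((n : ℝ) - t)) ^ t := by
      rw [div_pow, div_le_div_iff₀ hCpos (by positivity)]
      linarith [hkeyR]
    refine le_trans step1 ?_
    apply pow_le_pow_left₀ (by positivity)
    apply div_le_div_of_nonneg_left (by positivity) hK
    linarith

lemma witness_bound (n r : ℕ) (hrn : r ≤ n) (K : ℝ) (hK : 0 < (n : ℝ) - K)
    {ι : Type} (S : Finset ι) (w : ι → Fin n → Finset (Fin n)) (Ev : Omega n r → Prop)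
    (M : ℕ) (hwit : ∀ ω, Ev ω → ∃ x ∈ S, ∀ i, w x i ⊆ (ω i).1)
    (hT : ∀ x ∈ S, (∀ i, ((w x i).card : ℝ) ≤ K) ∧ ∑ i, (w x i).card = M) :
    prob n r Ev ≤ (S.card : ℝ) * ((r : ℝ) / ((n : ℝ) - K)) ^ M := by
  calc prob n r Ev ≤ ∑ x ∈ S, prob n r (fun ω => ∀ i, w x i ⊆ (ω i).1) :=
        prob_le_sum n r S _ _ hwit
    _ ≤ ∑ _x ∈ S, ((r : ℝ) / ((n : ℝ) - K)) ^ M := by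
        apply Finset.sum_le_sum
        intro x hx
        rw [← (hT x hx).2]
        exact prob_subset_le n r hrn K hK (w x) (hT x hx).1
    _ = (S.card : ℝ) * ((r : ℝ) / ((n : ℝ) - K)) ^ M := by
        rw [Finset.sum_const, nsmul_eq_mul]

lemma pair_bound (n r : ℕ) (hrn : r ≤ n) (K : ℝ) (hK : 0 < (n : ℝ) - K) (h3K : 3 ≤ K)
    (A B : Finset (Fin n)) (hA : 3 ≤ A.card) (hB : 3 ≤ B.card)
    (hAK : (A.card : ℝ) ≤ K) (hBK : (B.card : ℝ) ≤ K) :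
    prob n r (fun ω => (∀ i ∈ A, 2 < (B.filter fun j => sample ω i j = true).card) ∧
        (∀ j ∈ B, 2 < (A.filter fun i => sample ω i j = true).card))
      ≤ ((K * ((r : ℝ) / ((n : ℝ) - K))) ^ 3) ^ (max A.card B.card) := by
  classical
  set x : ℝ := (r : ℝ) / ((n : ℝ) - K) with hxdef
  have hx0 : 0 ≤ x := by positivity
  have hK0 : (0:ℝ) ≤ K := by linarith
  rcases le_total B.card A.card with hba | hab
  · -- row case: use first conjunct, exponent A.card = max
    have hmax : max A.card B.card = A.card := max_eq_left hba
    set S : Finset (Fin n → Finset (Fin n)) :=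
      Fintype.piFinset (fun i => if i ∈ A then B.powersetCard 3 else {∅}) with hSdef
    have hwit : ∀ ω : Omega n r,
        ((∀ i ∈ A, 2 < (B.filter fun j => sample ω i j = true).card) ∧
          (∀ j ∈ B, 2 < (A.filter fun i => sample ω i j = true).card)) →
        ∃ g ∈ S, ∀ i, g i ⊆ (ω i).1 := by
      intro ω hEv
      have hch : ∀ i ∈ A, ∃ T, T ⊆ (B.filter fun j => sample ω i j = true) ∧ T.card = 3 :=
        fun i hi => Finset.exists_subset_card_eq (hEv.1 i hi)
      set g : Fin n → Finset (Fin n) := fun i =>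
        if h : i ∈ A then (hch i h).choose else ∅ with hgdef
      refine ⟨g, ?_, ?_⟩
      · rw [hSdef, Fintype.mem_piFinset]
        intro i
        by_cases hi : i ∈ A
        · simp only [hgdef, dif_pos hi, if_pos hi, Finset.mem_powersetCard]
          obtain ⟨h1, h2⟩ := (hch i hi).choose_spec
          exact ⟨h1.trans (Finset.filter_subset _ _), h2⟩
        · simp [hgdef, dif_neg hi, if_neg hi]
      · intro i
        by_cases hi : i ∈ A
        · intro j hj
          simp only [hgdef, dif_pos hi] at hj
          have := (hch i hi).choose_spec.1 hj
          simp only [Finset.mem_filter, sample, decide_eq_true_eq] at this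
          exact this.2
        · simp [hgdef, dif_neg hi]
    have hT : ∀ g ∈ S, (∀ i, ((g i).card : ℝ) ≤ K) ∧ ∑ i, (g i).card = 3 * A.card := by
      intro g hgS
      rw [hSdef, Fintype.mem_piFinset] at hgS
      have hcard : ∀ i, (g i).card = if i ∈ A then 3 else 0 := by
        intro i
        have := hgS i
        by_cases hi : i ∈ A
        · rw [if_pos hi] at this ⊢
          exact (Finset.mem_powersetCard.mp this).2
        · rw [if_neg hi] at this ⊢
          simp only [Finset.mem_singleton] at this
          rw [this]; simp
      constructor
      · intro i
        rw [hcard i]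
        by_cases hi : i ∈ A <;> simp [hi] <;> linarith
      · rw [Finset.sum_congr rfl (fun i _ => hcard i)]
        rw [Finset.sum_ite_mem, Finset.univ_inter, Finset.sum_const, smul_eq_mul]
        ring
    have hScard : S.card = (B.card.choose 3) ^ A.card := by
      rw [hSdef, Fintype.card_piFinset]
      have : ∀ i : Fin n, ((if i ∈ A then B.powersetCard 3 else {∅}).card)
          = if i ∈ A then B.card.choose 3 else 1 := by
        intro i
        by_cases hi : i ∈ A <;> simp [hi, Finset.card_powersetCard]
      rw [Finset.prod_congr rfl (fun i _ => this i), Finset.prod_ite_mem,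
        Finset.univ_inter, Finset.prod_const]
    have := witness_bound n r hrn K hK S id _ (3 * A.card) hwit hT
    refine le_trans this ?_
    rw [hScard, hmax]
    push_cast
    calc ((B.card.choose 3 : ℝ)) ^ A.card * x ^ (3 * A.card)
        = ((B.card.choose 3 : ℝ) * x ^ 3) ^ A.card := by
          rw [mul_pow, pow_mul]
      _ ≤ ((K * x) ^ 3) ^ A.card := by
          apply pow_le_pow_left₀ (by positivity)
          rw [mul_pow]
          apply mul_le_mul_of_nonneg_right _ (by positivity)
          calc ((B.card.choose 3 : ℝ)) ≤ ((B.card : ℝ)) ^ 3 := by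
                exact_mod_cast Nat.choose_le_pow B.card 3
            _ ≤ K ^ 3 := by
                apply pow_le_pow_left₀ (by positivity) hBK
  · -- column case: use second conjunct, exponent B.card = max
    have hmax : max A.card B.card = B.card := max_eq_right hab
    set S : Finset (Fin n → Finset (Fin n)) :=
      Fintype.piFinset (fun j => if j ∈ B then A.powersetCard 3 else {∅}) with hSdef
    set w : (Fin n → Finset (Fin n)) → Fin n → Finset (Fin n) :=
      fun f i => B.filter (fun j => i ∈ f j) with hwdef
    have hwit : ∀ ω : Omega n r,
        ((∀ i ∈ A, 2 < (B.filter fun j => sample ω i j = true).card) ∧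
          (∀ j ∈ B, 2 < (A.filter fun i => sample ω i j = true).card)) →
        ∃ f ∈ S, ∀ i, w f i ⊆ (ω i).1 := by
      intro ω hEv
      have hch : ∀ j ∈ B, ∃ T, T ⊆ (A.filter fun i => sample ω i j = true) ∧ T.card = 3 :=
        fun j hj => Finset.exists_subset_card_eq (hEv.2 j hj)
      set f : Fin n → Finset (Fin n) := fun j =>
        if h : j ∈ B then (hch j h).choose else ∅ with hfdef
      refine ⟨f, ?_, ?_⟩
      · rw [hSdef, Fintype.mem_piFinset]
        intro j
        by_cases hj : j ∈ B
        · simp only [hfdef, dif_pos hj, if_pos hj, Finset.mem_powersetCard]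
          obtain ⟨h1, h2⟩ := (hch j hj).choose_spec
          exact ⟨h1.trans (Finset.filter_subset _ _), h2⟩
        · simp [hfdef, dif_neg hj, if_neg hj]
      · intro i j hj
        simp only [hwdef, Finset.mem_filter] at hj
        obtain ⟨hjB, hif⟩ := hj
        simp only [hfdef, dif_pos hjB] at hif
        have := (hch j hjB).choose_spec.1 hif
        simp only [Finset.mem_filter, sample, decide_eq_true_eq] at this
        exact this.2
    have hT : ∀ f ∈ S, (∀ i, ((w f i).card : ℝ) ≤ K) ∧ ∑ i, (w f i).card = 3 * B.card := by
      intro f hfS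
      rw [hSdef, Fintype.mem_piFinset] at hfS
      have hfj : ∀ j, (f j).card = if j ∈ B then 3 else 0 := by
        intro j
        have := hfS j
        by_cases hj : j ∈ B
        · rw [if_pos hj] at this ⊢
          exact (Finset.mem_powersetCard.mp this).2
        · rw [if_neg hj] at this ⊢
          simp only [Finset.mem_singleton] at this
          rw [this]; simp
      constructor
      · intro i
        calc ((w f i).card : ℝ) ≤ (B.card : ℝ) := by
              exact_mod_cast Finset.card_filter_le _ _
          _ ≤ K := hBK
      · calc ∑ i, (w f i).card = ∑ i, ∑ j ∈ B, (if i ∈ f j then 1 else 0) := by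
              apply Finset.sum_congr rfl
              intro i _
              rw [hwdef]
              exact Finset.card_filter _ _
          _ = ∑ j ∈ B, ∑ i : Fin n, (if i ∈ f j then 1 else 0) := Finset.sum_comm
          _ = ∑ j ∈ B, (f j).card := by
              apply Finset.sum_congr rfl
              intro j _
              rw [← Finset.card_filter, Finset.filter_univ_mem]
          _ = 3 * B.card := by
              rw [Finset.sum_congr rfl (fun j hj => by rw [hfj j, if_pos hj]),
                Finset.sum_const, smul_eq_mul]
              ring
    have hScard : S.card = (A.card.choose 3) ^ B.card := by
      rw [hSdef, Fintype.card_piFinset]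
      have : ∀ j : Fin n, ((if j ∈ B then A.powersetCard 3 else {∅}).card)
          = if j ∈ B then A.card.choose 3 else 1 := by
        intro j
        by_cases hj : j ∈ B <;> simp [hj, Finset.card_powersetCard]
      rw [Finset.prod_congr rfl (fun j _ => this j), Finset.prod_ite_mem,
        Finset.univ_inter, Finset.prod_const]
    have := witness_bound n r hrn K hK S w _ (3 * B.card) hwit hT
    refine le_trans this ?_
    rw [hScard, hmax]
    push_cast
    calc ((A.card.choose 3 : ℝ)) ^ B.card * x ^ (3 * B.card)
        = ((A.card.choose 3 : ℝ) * x ^ 3) ^ B.card := by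
          rw [mul_pow, pow_mul]
      _ ≤ ((K * x) ^ 3) ^ B.card := by
          apply pow_le_pow_left₀ (by positivity)
          rw [mul_pow]
          apply mul_le_mul_of_nonneg_right _ (by positivity)
          calc ((A.card.choose 3 : ℝ)) ≤ ((A.card : ℝ)) ^ 3 := by
                exact_mod_cast Nat.choose_le_pow A.card 3
            _ ≤ K ^ 3 := by
                apply pow_le_pow_left₀ (by positivity) hAK

lemma sum_pow_card_le (n : ℕ) (hn : 1 ≤ n) :
    ∑ A : Finset (Fin n), ((n:ℝ)⁻¹) ^ A.card ≤ 3 := by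
  have hn0 : (0:ℝ) < n := by exact_mod_cast hn
  have hθ : (0:ℝ) ≤ (n:ℝ)⁻¹ := by positivity
  have hid : ∑ A : Finset (Fin n), ((n:ℝ)⁻¹) ^ A.card = ((n:ℝ)⁻¹ + 1) ^ n := by
    have h := Finset.prod_add (fun _ : Fin n => (n:ℝ)⁻¹) (fun _ => (1:ℝ)) Finset.univ
    simp only [Finset.prod_const, one_pow, mul_one, Finset.card_univ, Fintype.card_fin,
      Finset.powerset_univ] at h
    rw [← h]
  rw [hid]
  calc ((n:ℝ)⁻¹ + 1) ^ n ≤ (Real.exp ((n:ℝ)⁻¹)) ^ n := by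
        apply pow_le_pow_left₀ (by positivity)
        exact Real.add_one_le_exp _
    _ = Real.exp 1 := by
        rw [← Real.exp_nat_mul, mul_inv_cancel₀ (ne_of_gt hn0)]
    _ ≤ 3 := le_of_lt (lt_trans Real.exp_one_lt_d9 (by norm_num))

set_option maxHeartbeats 1000000 in
/-- For a random `n × n` Boolean matrix whose rows are independent uniform `r`-subsets
of `[n]` with `r < n^(0.01)`, with probability `1 - o(1)` (as `n → ∞`) every `a × b`
submatrix with `2 < a, b ≤ n^(1/4)` contains a row or a column with at most two
`1`-entries. -/
theorem small_submatrices_sparse :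
    ∀ ε : ℝ, 0 < ε → ∃ N : ℕ, ∀ n : ℕ, N ≤ n → ∀ r : ℕ,
      (r : ℝ) < (n : ℝ) ^ (0.01 : ℝ) →
      prob n r (fun ω => ¬ ∀ A B : Finset (Fin n),
          2 < A.card → 2 < B.card →
          (A.card : ℝ) ≤ (n : ℝ) ^ ((1 : ℝ) / 4) →
          (B.card : ℝ) ≤ (n : ℝ) ^ ((1 : ℝ) / 4) →
          (∃ i ∈ A, (B.filter fun j => sample ω i j = true).card ≤ 2) ∨
          (∃ j ∈ B, (A.filter fun i => sample ω i j = true).card ≤ 2)) ≤ ε := by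
  intro ε hε
  have hT1 : Filter.Tendsto (fun m : ℕ => ((m:ℝ)) ^ ((1:ℝ)/4)) Filter.atTop Filter.atTop :=
    (tendsto_rpow_atTop (by norm_num)).comp tendsto_natCast_atTop_atTop
  have hT2 : Filter.Tendsto (fun m : ℕ => ((m:ℝ)) ^ ((3:ℝ)/4)) Filter.atTop Filter.atTop :=
    (tendsto_rpow_atTop (by norm_num)).comp tendsto_natCast_atTop_atTop
  have hT3 : Filter.Tendsto (fun m : ℕ => ((m:ℝ)) ^ (-(0.22):ℝ)) Filter.atTop (nhds 0) :=
    (tendsto_rpow_neg_atTop (by norm_num)).comp tendsto_natCast_atTop_atTop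
  have hT4 : Filter.Tendsto (fun m : ℕ => 9 * (8 * ((m:ℝ)) ^ (-(0.22):ℝ)) ^ 3)
      Filter.atTop (nhds 0) := by
    have := ((hT3.const_mul (8:ℝ)).pow 3).const_mul (9:ℝ)
    simpa using this
  have hev : ∀ᶠ m : ℕ in Filter.atTop, (1 ≤ m ∧ 3 ≤ ((m:ℝ)) ^ ((1:ℝ)/4)
      ∧ 2 ≤ ((m:ℝ)) ^ ((3:ℝ)/4) ∧ 8 * ((m:ℝ)) ^ (-(0.22):ℝ) ≤ 1
      ∧ 9 * (8 * ((m:ℝ)) ^ (-(0.22):ℝ)) ^ 3 ≤ ε) := by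
    have E4 : ∀ᶠ m : ℕ in Filter.atTop, 8 * ((m:ℝ)) ^ (-(0.22):ℝ) ≤ 1 := by
      have h := hT3.const_mul (8:ℝ)
      rw [mul_zero] at h
      exact (h.eventually_lt_const (by norm_num : (0:ℝ) < 1)).mono fun m hm => hm.le
    have E5 : ∀ᶠ m : ℕ in Filter.atTop, 9 * (8 * ((m:ℝ)) ^ (-(0.22):ℝ)) ^ 3 ≤ ε :=
      (hT4.eventually_lt_const hε).mono fun m hm => hm.le
    exact (Filter.eventually_ge_atTop 1).and ((hT1.eventually_ge_atTop 3).and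
      ((hT2.eventually_ge_atTop 2).and (E4.and E5)))
  obtain ⟨N, hN⟩ := Filter.eventually_atTop.mp hev
  refine ⟨N, fun n hn r hr => ?_⟩
  obtain ⟨hn1, hK3, h34, h8, h9ε⟩ := hN n hn
  set K : ℝ := (n:ℝ) ^ ((1:ℝ)/4) with hKdef
  have hn0 : (0:ℝ) < n := by exact_mod_cast hn1
  have hK0 : (0:ℝ) ≤ K := Real.rpow_nonneg hn0.le _
  have hmul : K * (n:ℝ) ^ ((3:ℝ)/4) = n := by
    rw [hKdef, ← Real.rpow_add hn0]
    norm_num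
  have hKn2 : K ≤ (n:ℝ)/2 := by nlinarith
  have hK : 0 < (n:ℝ) - K := by nlinarith
  have hr0 : (0:ℝ) ≤ r := Nat.cast_nonneg r
  have hr' : (r:ℝ) < (n:ℝ) := by
    refine lt_of_lt_of_le hr ?_
    calc (n:ℝ) ^ (0.01:ℝ) ≤ (n:ℝ) ^ (1:ℝ) :=
          Real.rpow_le_rpow_of_exponent_le (by exact_mod_cast hn1) (by norm_num)
      _ = n := Real.rpow_one _
  have hrn : r ≤ n := by exact_mod_cast hr'.le
  set x : ℝ := (r:ℝ) / ((n:ℝ) - K) with hxdef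
  set D : ℝ := (K * x) ^ 3 with hDdef
  have hD0 : 0 ≤ D := by positivity
  -- bound on n^2 * D
  have hxle : x ≤ 2 * (r:ℝ) / n := by
    rw [hxdef, div_le_div_iff₀ hK hn0]
    nlinarith
  have hK3e : K ^ (3:ℕ) = (n:ℝ) ^ ((3:ℝ)/4) := by
    rw [hKdef, ← Real.rpow_natCast ((n:ℝ) ^ ((1:ℝ)/4)) 3, ← Real.rpow_mul hn0.le]
    norm_num
  have hr3 : (r:ℝ) ^ (3:ℕ) ≤ (n:ℝ) ^ (0.03:ℝ) := by
    calc (r:ℝ) ^ (3:ℕ) ≤ ((n:ℝ) ^ (0.01:ℝ)) ^ (3:ℕ) := by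
          apply pow_le_pow_left₀ hr0 hr.le
      _ = (n:ℝ) ^ (0.03:ℝ) := by
          rw [← Real.rpow_natCast ((n:ℝ) ^ (0.01:ℝ)) 3, ← Real.rpow_mul hn0.le]
          norm_num
  have hn2D : (n:ℝ)^2 * D ≤ 8 * (n:ℝ) ^ (-(0.22):ℝ) := by
    have hstep : (n:ℝ)^2 * D ≤ (n:ℝ)^2 * (K * (2 * (r:ℝ)/n)) ^ 3 := by
      apply mul_le_mul_of_nonneg_left _ (by positivity)
      apply pow_le_pow_left₀ (by positivity)
      exact mul_le_mul_of_nonneg_left hxle hK0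
    refine hstep.trans ?_
    have hcalc : (n:ℝ)^2 * (K * (2 * (r:ℝ)/n)) ^ 3
        = 8 * (r:ℝ)^(3:ℕ) * (K^(3:ℕ) / n) := by
      field_simp
      ring
    rw [hcalc, hK3e]
    have e1 : (n:ℝ) ^ ((3:ℝ)/4) / (n:ℝ) = (n:ℝ) ^ (-(1/4) : ℝ) := by
      rw [show (-(1/4):ℝ) = 3/4 - 1 by norm_num, Real.rpow_sub hn0, Real.rpow_one]
    have e2 : (n:ℝ) ^ (0.03:ℝ) * (n:ℝ) ^ (-(1/4):ℝ) = (n:ℝ) ^ (-(0.22):ℝ) := by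
      rw [← Real.rpow_add hn0]
      norm_num
    have hrp : (0:ℝ) ≤ (n:ℝ) ^ (-(1/4):ℝ) := Real.rpow_nonneg hn0.le _
    calc 8 * (r:ℝ)^(3:ℕ) * ((n:ℝ)^((3:ℝ)/4)/(n:ℝ))
        = 8 * (r:ℝ)^(3:ℕ) * (n:ℝ)^(-(1/4):ℝ) := by rw [e1]
      _ ≤ 8 * (n:ℝ)^(0.03:ℝ) * (n:ℝ)^(-(1/4):ℝ) := by
          apply mul_le_mul_of_nonneg_right _ hrp
          linarith [hr3]
      _ = 8 * (n:ℝ)^(-(0.22):ℝ) := by rw [mul_assoc, e2]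
  -- main chain
  have hD1 : (n:ℝ)^2 * D ≤ 1 := hn2D.trans h8
  have hinv1 : (n:ℝ)⁻¹ ≤ 1 := by
    rw [inv_le_one_iff₀]
    right; exact_mod_cast hn1
  have hinv0 : (0:ℝ) ≤ (n:ℝ)⁻¹ := by positivity
  set Pr : Finset (Finset (Fin n) × Finset (Fin n)) := Finset.univ.filter
    (fun p => 2 < p.1.card ∧ 2 < p.2.card ∧ (p.1.card:ℝ) ≤ K ∧ (p.2.card:ℝ) ≤ K) with hPrdef
  have hub := prob_le_sum n r Pr
    (fun p ω => (∀ i ∈ p.1, 2 < (p.2.filter fun j => sample ω i j = true).card) ∧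
      (∀ j ∈ p.2, 2 < (p.1.filter fun i => sample ω i j = true).card))
    (fun ω => ¬ ∀ A B : Finset (Fin n),
          2 < A.card → 2 < B.card →
          (A.card : ℝ) ≤ (n : ℝ) ^ ((1 : ℝ) / 4) →
          (B.card : ℝ) ≤ (n : ℝ) ^ ((1 : ℝ) / 4) →
          (∃ i ∈ A, (B.filter fun j => sample ω i j = true).card ≤ 2) ∨
          (∃ j ∈ B, (A.filter fun i => sample ω i j = true).card ≤ 2))
    (by
      intro ω hω
      push_neg at hω
      obtain ⟨A, B, h1, h2, h3, h4, h5, h6⟩ := hω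
      exact ⟨(A, B), by simp [hPrdef, h1, h2]; exact ⟨h3, h4⟩, h5, h6⟩)
  refine le_trans hub ?_
  have hstep2 : ∑ p ∈ Pr, prob n r
      (fun ω => (∀ i ∈ p.1, 2 < (p.2.filter fun j => sample ω i j = true).card) ∧
        (∀ j ∈ p.2, 2 < (p.1.filter fun i => sample ω i j = true).card))
      ≤ ∑ p ∈ Pr, ((n:ℝ)^2*D)^3 * (((n:ℝ)⁻¹)^p.1.card * ((n:ℝ)⁻¹)^p.2.card) := by
    apply Finset.sum_le_sum
    intro p hp
    rw [hPrdef, Finset.mem_filter] at hp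
    obtain ⟨-, hp1, hp2, hp3, hp4⟩ := hp
    have hb := pair_bound n r hrn K hK hK3 p.1 p.2 hp1 hp2 hp3 hp4
    refine le_trans hb ?_
    set a := p.1.card
    set b := p.2.card
    set m := max a b with hmdef
    have h3m : 3 ≤ m := le_trans hp1 (le_max_left _ _)
    have hab2m : a + b ≤ 2 * m := by
      have := le_max_left a b
      have := le_max_right a b
      omega
    have hDm : ((K * x) ^ 3) ^ m = ((n:ℝ)^2*D)^m * ((n:ℝ)⁻¹)^(2*m) := by
      rw [pow_mul, ← mul_pow, ← hDdef]
      congr 1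
      field_simp
    rw [hDm]
    have hf1 : ((n:ℝ)^2*D)^m ≤ ((n:ℝ)^2*D)^3 :=
      pow_le_pow_of_le_one (by positivity) hD1 h3m
    have hf2 : ((n:ℝ)⁻¹)^(2*m) ≤ ((n:ℝ)⁻¹)^(a+b) :=
      pow_le_pow_of_le_one hinv0 hinv1 hab2m
    calc ((n:ℝ)^2*D)^m * ((n:ℝ)⁻¹)^(2*m)
        ≤ ((n:ℝ)^2*D)^3 * ((n:ℝ)⁻¹)^(a+b) :=
          mul_le_mul hf1 hf2 (by positivity) (by positivity)
      _ = ((n:ℝ)^2*D)^3 * (((n:ℝ)⁻¹)^a * ((n:ℝ)⁻¹)^b) := by rw [pow_add]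
  refine le_trans hstep2 ?_
  have hstep3 : ∑ p ∈ Pr, ((n:ℝ)^2*D)^3 * (((n:ℝ)⁻¹)^p.1.card * ((n:ℝ)⁻¹)^p.2.card)
      ≤ ∑ p : Finset (Fin n) × Finset (Fin n),
          ((n:ℝ)^2*D)^3 * (((n:ℝ)⁻¹)^p.1.card * ((n:ℝ)⁻¹)^p.2.card) :=
    Finset.sum_le_sum_of_subset_of_nonneg (Finset.subset_univ _)
      (fun p _ _ => by positivity)
  refine le_trans hstep3 ?_
  have hsplit : ∑ p : Finset (Fin n) × Finset (Fin n),
      ((n:ℝ)^2*D)^3 * (((n:ℝ)⁻¹)^p.1.card * ((n:ℝ)⁻¹)^p.2.card)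
      = ((n:ℝ)^2*D)^3 * ((∑ A : Finset (Fin n), ((n:ℝ)⁻¹)^A.card)
          * (∑ B : Finset (Fin n), ((n:ℝ)⁻¹)^B.card)) := by
    rw [← Finset.mul_sum]
    congr 1
    rw [Finset.sum_mul_sum, Fintype.sum_prod_type]
  rw [hsplit]
  have hsum3 := sum_pow_card_le n hn1
  have hsum0 : (0:ℝ) ≤ ∑ A : Finset (Fin n), ((n:ℝ)⁻¹)^A.card :=
    Finset.sum_nonneg fun A _ => by positivity
  calc ((n:ℝ)^2*D)^3 * ((∑ A : Finset (Fin n), ((n:ℝ)⁻¹)^A.card)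
          * (∑ B : Finset (Fin n), ((n:ℝ)⁻¹)^B.card))
      ≤ ((n:ℝ)^2*D)^3 * (3 * 3) := by
        apply mul_le_mul_of_nonneg_left _ (by positivity)
        exact mul_le_mul hsum3 hsum3 hsum0 (by norm_num)
    _ ≤ (8 * (n:ℝ) ^ (-(0.22):ℝ))^3 * (3*3) := by
        apply mul_le_mul_of_nonneg_right _ (by norm_num)
        exact pow_le_pow_left₀ (by positivity) hn2D 3
    _ = 9 * (8 * (n:ℝ) ^ (-(0.22):ℝ))^3 := by ring
    _ ≤ ε := h9ε
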